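/- As μ → 0⁺, g(μ)/μ^{3/2} → 1; that is, in the nonrelativistic limit the energy density of the noninteracting neutron gas is asymptotic to the fermion number density n(μ) = μ^{3/2}. -/

import Mathlib

open Filter

/-- Dimensionless energy density of a noninteracting neutron gas. -/
noncomputable def g (μ : ℝ) : ℝ :=
  (1/8) * ((6*μ + 3) * Real.sqrt (μ + μ^2) - 3 * Real.log (Real.sqrt μ + Real.sqrt (1 + μ)))

/-!
Both `g` and `μ ^ (3/2)` vanish at `0`. Since `log (√μ + √(1 + μ)) = arsinh √μ`, one computes
`g' μ = 3/2 * √μ * √(1 + μ)`, while `(μ ^ (3/2))' = 3/2 * √μ`; the ratio of the derivatives is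
`√(1 + μ) → 1`, and L'Hôpital's rule concludes.
-/

open Real Topology

lemma log_sqrt_add_sqrt_one_add {x : ℝ} (hx : 0 ≤ x) : log (√x + √(1 + x)) = arsinh √x := by
  rw [arsinh, sq_sqrt hx]

lemma g_eq_arsinh {μ : ℝ} (hμ : 0 ≤ μ) :
    g μ = (1/8) * ((6*μ + 3) * (√μ * √(1 + μ)) - 3 * arsinh √μ) := by
  rw [g, log_sqrt_add_sqrt_one_add hμ, ← sqrt_mul hμ, mul_one_add, ← sq]

lemma hasDerivAt_g {μ : ℝ} (hμ : 0 < μ) : HasDerivAt g (3/2 * √μ * √(1 + μ)) μ := by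
  have hsqrt := hasDerivAt_sqrt hμ.ne'
  have hsqrt_one_add := ((hasDerivAt_id' μ).const_add 1).sqrt (by positivity)
  have hderiv := (((((hasDerivAt_id μ).const_mul 6).add_const 3).mul
    (hsqrt.mul hsqrt_one_add)).sub (hsqrt.arsinh.const_mul 3)).const_mul (1/8 : ℝ)
  refine (hderiv.congr_of_eventuallyEq ?_).congr_deriv ?_
  · filter_upwards [lt_mem_nhds hμ] with x hx using g_eq_arsinh hx.le
  · simp only [id, Pi.mul_apply, smul_eq_mul, sq_sqrt hμ.le]
    field_simp
    rw [sq_sqrt hμ.le, sq_sqrt (by positivity)]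
    ring

lemma hasDerivAt_rpow_three_halves {x : ℝ} (hx : 0 < x) :
    HasDerivAt (fun x : ℝ => x ^ (3/2 : ℝ)) (3/2 * √x) x := by
  convert hasDerivAt_rpow_const (p := 3/2) (Or.inl hx.ne') using 2
  rw [sqrt_eq_rpow]
  norm_num

lemma tendsto_g_nhdsGT_zero : Tendsto g (𝓝[>] 0) (𝓝 0) := by
  have hcont : ContinuousAt g 0 := by
    unfold g
    fun_prop (disch := simp)
  simpa [g] using hcont.tendsto.mono_left nhdsWithin_le_nhds

/-- As μ → 0⁺, g(μ)/μ^{3/2} → 1: in the nonrelativistic limit the energy density is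
    asymptotic to the fermion number density n(μ) = μ^{3/2}. -/
theorem nonrelativistic_limit_g :
    Tendsto (fun μ : ℝ => g μ / μ ^ ((3:ℝ)/2)) (nhdsWithin 0 (Set.Ioi 0)) (nhds 1) := by
  have hpos : ∀ᶠ μ in 𝓝[>] (0:ℝ), 0 < μ := self_mem_nhdsWithin
  have hrpow : Tendsto (fun μ : ℝ => μ ^ (3/2 : ℝ)) (𝓝[>] 0) (𝓝 0) := by
    simpa using ((continuous_rpow_const (by norm_num : (0:ℝ) ≤ 3/2)).tendsto 0).mono_left
      nhdsWithin_le_nhds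
  have hratio : Tendsto (fun μ => 3/2 * √μ * √(1 + μ) / (3/2 * √μ)) (𝓝[>] 0) (𝓝 1) := by
    have hsqrt : Tendsto (fun μ : ℝ => √(1 + μ)) (𝓝[>] 0) (𝓝 1) := by
      have hcont : Continuous fun μ : ℝ => √(1 + μ) := by fun_prop
      simpa using (hcont.tendsto 0).mono_left nhdsWithin_le_nhds
    exact hsqrt.congr' (hpos.mono fun μ hμ => (mul_div_cancel_left₀ _ (by positivity)).symm)
  exact HasDerivAt.lhopital_zero_nhdsGT (hpos.mono fun μ => hasDerivAt_g)
    (hpos.mono fun μ => hasDerivAt_rpow_three_halves) (hpos.mono fun μ hμ => by positivity)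
    tendsto_g_nhdsGT_zero hrpow hratio
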